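/- The rule-based drastic inconsistency measure I^RB_d satisfies Rule Consistency: I^RB_d(B) = 0 if and only if for all consistent subsets F' of the facts of B, R(B) ∪ F' is consistent. -/

import Mathlib

open scoped Classical

/-- A rule over atoms `A`: literals are pairs (atom, sign). -/
structure Rule (A : Type*) where
  body : Finset (A × Bool)
  head : A × Bool
deriving DecidableEq

abbrev RuleBase (A : Type*) := Finset (Rule A)

variable {A : Type*}

/-- The complement of a literal. -/
def litCompl (l : A × Bool) : A × Bool := (l.1, !l.2)

/-- The fact with head `l` (empty body). -/
def factR (l : A × Bool) : Rule A := ⟨∅, l⟩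

/-- The facts (empty-body rules) of a rule base. -/
noncomputable def facts [DecidableEq A] (B : RuleBase A) : RuleBase A :=
  B.filter (fun r => r.body = ∅)

/-- The proper (non-fact) rules of a rule base. -/
noncomputable def properRules [DecidableEq A] (B : RuleBase A) : RuleBase A :=
  B.filter (fun r => r.body ≠ ∅)

/-- A set of literals is closed w.r.t. a rule base. -/
def Closed (B : RuleBase A) (M : Set (A × Bool)) : Prop :=
  ∀ r ∈ B, (↑r.body ⊆ M) → r.head ∈ M

/-- The minimal model: the smallest closed set of literals. -/
def minModel (B : RuleBase A) : Set (A × Bool) :=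
  {l | ∀ M : Set (A × Bool), Closed B M → l ∈ M}

/-- A set of literals is consistent if it contains no complementary pair. -/
def ConsistentLits (M : Set (A × Bool)) : Prop :=
  ¬ ∃ a : A, (a, true) ∈ M ∧ (a, false) ∈ M

/-- A rule base is consistent if its minimal model is consistent. -/
def Consistent (B : RuleBase A) : Prop := ConsistentLits (minModel B)

/-- The minimal inconsistent subsets of a rule base. -/
def MI (B : RuleBase A) : Set (RuleBase A) :=
  { M | M ⊆ B ∧ ¬ Consistent M ∧ ∀ M' ⊂ M, Consistent M' }

/-- `M` contains a complementary pair of facts. -/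
def hasComplFactPair (M : RuleBase A) : Prop :=
  ∃ a : A, factR (a, true) ∈ M ∧ factR (a, false) ∈ M

/-- Minimal inconsistent subsets containing no complementary pair of facts. -/
def MIF (B : RuleBase A) : Set (RuleBase A) :=
  { M ∈ MI B | ¬ hasComplFactPair M }

/-- A formula is free in a rule base if it belongs to no minimal inconsistent subset. -/
def Free (r : Rule A) (B : RuleBase A) : Prop := ∀ M ∈ MI B, r ∉ M

/-- Rule consistency: the rules together with any consistent set of facts are consistent. -/
def RuleConsistent [DecidableEq A] (B : RuleBase A) : Prop :=
  ∀ F' ⊆ facts B, Consistent F' → Consistent (properRules B ∪ F')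

/-- The drastic inconsistency measure. -/
noncomputable def Idr (B : RuleBase A) : ℕ := if Consistent B then 0 else 1

/-- The rule-based drastic inconsistency measure. -/
noncomputable def IRBd (B : RuleBase A) : ℕ := if MIF B = ∅ then 0 else 1

/-- The rule-based MI-inconsistency measure. -/
noncomputable def IRBMI (B : RuleBase A) : ℕ := (MIF B).ncard

/-- The rule-based problematic inconsistency measure: number of distinct
    non-fact rules occurring in some element of `MIF B`. -/
noncomputable def IRBp (B : RuleBase A) : ℕ :=
  {r : Rule A | r.body ≠ ∅ ∧ ∃ M ∈ MIF B, r ∈ M}.ncard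

/-- Three truth values. -/
inductive TV | t | b | f
deriving DecidableEq

def TV.negv : TV → TV
  | .t => .f
  | .f => .t
  | .b => .b

/-- Value of a literal under a three-valued interpretation. -/
def litVal (v : A → TV) (l : A × Bool) : TV :=
  if l.2 then v l.1 else (v l.1).negv

/-- Designated truth values. -/
def TV.des : TV → Prop
  | .f => False
  | _ => True

/-- Three-valued satisfaction of a rule. -/
def sat3 (v : A → TV) (r : Rule A) : Prop :=
  (∀ l ∈ r.body, (litVal v l).des) → (litVal v r.head).des

/-- The rule-based contension inconsistency measure. -/
noncomputable def IRBc (B : RuleBase A) : ℕ :=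
  sInf { n : ℕ | ∃ v : A → TV,
    (∀ M ∈ MIF B, ∀ r ∈ M, sat3 v r) ∧ n = {a : A | v a = TV.b}.ncard }

/-- The payoff of `α` in coalition `C` (w.r.t. rule base `B` and measure `I`). -/
noncomputable def CoalPayoff [DecidableEq A] (I : RuleBase A → ℝ) (B : RuleBase A)
    (α : Rule A) (C : RuleBase A) : ℝ :=
  ((Nat.factorial (C.card - 1) * Nat.factorial (B.card - C.card) : ℕ) : ℝ)
    / ((Nat.factorial B.card : ℕ) : ℝ) * (I C - I (C.erase α))

/-- The additional payoff shifted from facts to non-free rules. -/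
noncomputable def AddPayoff [DecidableEq A] (I : RuleBase A → ℝ) (B : RuleBase A)
    (r : Rule A) (C : RuleBase A) : ℝ :=
  if Free r C then 0
  else (∑ f ∈ C.filter (fun x => x.body = ∅), CoalPayoff I B f C)
        / ((C.filter (fun x => x.body ≠ ∅ ∧ ¬ Free x C)).card : ℝ)

/-- The adjusted Shapley inconsistency value. -/
noncomputable def Sstar [DecidableEq A] (I : RuleBase A → ℝ) (B : RuleBase A)
    (α : Rule A) : ℝ :=
  if α.body = ∅ then 0
  else ∑ C ∈ B.powerset, (CoalPayoff I B α C + AddPayoff I B α C)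

/-!
A set of facts has the heads of its facts as minimal model, so it is consistent exactly when it
contains no complementary pair. Hence the facts of an element of `MIF B` are a consistent subset
of `facts B`, and the element lies inside `properRules B` together with them: it would be
consistent if `B` were rule consistent. Conversely, if `properRules B ∪ F'` is inconsistent for a
consistent `F' ⊆ facts B`, a minimal inconsistent subset of it has all its facts in `F'`, so it
has no complementary pair and belongs to `MIF B`.
-/

lemma minModel_mono {B₁ B₂ : RuleBase A} (h : B₁ ⊆ B₂) : minModel B₁ ⊆ minModel B₂ :=
  fun _ hl M hM => hl M fun r hr => hM r (h hr)

lemma Consistent.mono {B₁ B₂ : RuleBase A} (h : B₁ ⊆ B₂) (hc : Consistent B₂) :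
    Consistent B₁ :=
  fun ⟨a, ht, hf⟩ => hc ⟨a, minModel_mono h ht, minModel_mono h hf⟩

lemma exists_mem_MI_of_not_consistent {B : RuleBase A} (h : ¬ Consistent B) :
    ∃ M, M ∈ MI B := by
  obtain ⟨M, ⟨hMB, hM⟩, hmin⟩ :=
    (wellFounded_lt (α := RuleBase A)).has_min {M | M ⊆ B ∧ ¬ Consistent M} ⟨B, subset_rfl, h⟩
  exact ⟨M, hMB, hM, fun M' hM' => by_contra fun hc => hmin M' ⟨hM'.subset.trans hMB, hc⟩ hM'⟩

lemma minModel_eq_of_forall_body_eq_empty {F : RuleBase A} (hF : ∀ r ∈ F, r.body = ∅) :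
    minModel F = {l | factR l ∈ F} := by
  have hfact : ∀ r ∈ F, factR r.head = r := by
    rintro ⟨body, head⟩ hr
    obtain rfl : body = ∅ := hF _ hr
    rfl
  apply subset_antisymm
  · intro l hl
    exact hl _ fun r hr _ => (hfact r hr).symm ▸ hr
  · intro l hl M hM
    exact hM _ hl (by simp [factR])

lemma consistent_iff_not_hasComplFactPair {F : RuleBase A} (hF : ∀ r ∈ F, r.body = ∅) :
    Consistent F ↔ ¬ hasComplFactPair F := by
  rw [Consistent, ConsistentLits, minModel_eq_of_forall_body_eq_empty hF]
  rfl

lemma hasComplFactPair.mono {M N : RuleBase A} (h : M ⊆ N) (hM : hasComplFactPair M) :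
    hasComplFactPair N :=
  hM.imp fun _ ⟨ht, hf⟩ => ⟨h ht, h hf⟩

section Facts

variable [DecidableEq A]

lemma body_eq_empty_of_mem_facts {B : RuleBase A} {r : Rule A} (h : r ∈ facts B) :
    r.body = ∅ :=
  (Finset.mem_filter.mp h).2

lemma facts_mono {M B : RuleBase A} (h : M ⊆ B) : facts M ⊆ facts B :=
  Finset.filter_subset_filter _ h

lemma hasComplFactPair_facts_iff {M : RuleBase A} :
    hasComplFactPair (facts M) ↔ hasComplFactPair M := by
  simp [hasComplFactPair, facts, factR]

lemma subset_properRules_union_facts {M B : RuleBase A} (h : M ⊆ B) :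
    M ⊆ properRules B ∪ facts M := by
  intro r hr
  by_cases hb : r.body = ∅
  · exact Finset.mem_union_right _ (Finset.mem_filter.mpr ⟨hr, hb⟩)
  · exact Finset.mem_union_left _ (Finset.mem_filter.mpr ⟨h hr, hb⟩)

lemma facts_subset_of_subset_properRules_union {M B F : RuleBase A}
    (h : M ⊆ properRules B ∪ F) : facts M ⊆ F := by
  intro r hr
  obtain ⟨hrM, hb⟩ := Finset.mem_filter.mp hr
  rcases Finset.mem_union.mp (h hrM) with hrB | hrF
  · exact absurd hb (Finset.mem_filter.mp hrB).2
  · exact hrF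

lemma properRules_union_subset {B F : RuleBase A} (hF : F ⊆ facts B) :
    properRules B ∪ F ⊆ B :=
  Finset.union_subset (Finset.filter_subset _ _) (hF.trans (Finset.filter_subset _ _))

end Facts

lemma IRBd_eq_zero_iff {B : RuleBase A} : IRBd B = 0 ↔ MIF B = ∅ := by
  unfold IRBd
  split_ifs <;> simp_all

theorem stmt3 [DecidableEq A] (B : RuleBase A) :
    IRBd B = 0 ↔ RuleConsistent B := by
  rw [IRBd_eq_zero_iff, Set.eq_empty_iff_forall_notMem]
  constructor
  · intro hMIF F' hF' hF'c
    by_contra hinc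
    obtain ⟨M, hMsub, hMinc, hMmin⟩ := exists_mem_MI_of_not_consistent hinc
    have hF'facts : ∀ r ∈ F', r.body = ∅ := fun r hr => body_eq_empty_of_mem_facts (hF' hr)
    have hnopair : ¬ hasComplFactPair M := fun hpair =>
      (consistent_iff_not_hasComplFactPair hF'facts).mp hF'c <|
        (hasComplFactPair_facts_iff.mpr hpair).mono (facts_subset_of_subset_properRules_union hMsub)
    exact hMIF M ⟨⟨hMsub.trans (properRules_union_subset hF'), hMinc, hMmin⟩, hnopair⟩
  · rintro hrc M ⟨⟨hMB, hMinc, -⟩, hnopair⟩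
    have hfacts : Consistent (facts M) :=
      (consistent_iff_not_hasComplFactPair fun _ => body_eq_empty_of_mem_facts).mpr
        (hasComplFactPair_facts_iff.not.mpr hnopair)
    exact hMinc <| (hrc _ (facts_mono hMB) hfacts).mono (subset_properRules_union_facts hMB)
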